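/- Let f : ℂ^N → ℝ be L-smooth (differentiable with ‖∇f(x₁) − ∇f(x₂)‖ ≤ L‖x₁ − x₂‖ for all x₁,x₂, gradients taken with respect to the real inner product Re(v^H u)), let h : ℂ^N → ℝ be any function, and set F = h + f. Let B ∈ ℂ^{N×N} be Hermitian with B ⪰ η̲ I_N for some η̲ > 0, and let 0 < α < 2η̲/(η̲ + L). Suppose x_k, x_{k+1} ∈ ℂ^N satisfy Re⟨∇f(x_k), x_{k+1} − x_k⟩ ≤ −(1/2)(x_k − x_{k+1})^H ((2/α) B − η̲ I_N)(x_k − x_{k+1}) + h(x_k) − h(x_{k+1}). Then, with υ = η̲/α − (η̲ + L)/2 > 0, one has υ ‖x_k − x_{k+1}‖² ≤ F(x_k) − F(x_{k+1}); in particular F(x_{k+1}) ≤ F(x_k). -/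

import Mathlib

open Matrix
open scoped ComplexOrder

/-! An `L`-smooth `f` lies below its linearization plus `L/2 ‖y - x‖²` (the descent lemma, from
comparing `t ↦ f (x + t (y - x))` with a parabola), and `B ⪰ η̲ I` bounds the quadratic form of
`(2/α)B - η̲ I` below by `(2η̲/α - η̲)‖·‖²`. Adding both to the hypothesis on the step
leaves `(η̲/α - (η̲ + L)/2)‖x_k - x_{k+1}‖² ≤ F(x_k) - F(x_{k+1})`. -/

open Set in
theorem image_one_le_of_deriv_le_add_mul {φ φ' : ℝ → ℝ} {c : ℝ}
    (hφ : ∀ t ∈ Icc (0 : ℝ) 1, HasDerivAt φ (φ' t) t)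
    (hφ' : ∀ t ∈ Ico (0 : ℝ) 1, φ' t ≤ φ' 0 + c * t) :
    φ 1 ≤ φ 0 + φ' 0 + c / 2 := by
  have hbound : ∀ t, HasDerivAt (fun s ↦ φ 0 + s * φ' 0 + c / 2 * s ^ 2) (φ' 0 + c * t) t :=
    fun t ↦ by
      refine ((((hasDerivAt_id' t).mul_const (φ' 0)).const_add (φ 0)).add
        ((hasDerivAt_pow 2 t).const_mul (c / 2))).congr_deriv ?_
      norm_num
      ring
  have key := image_le_of_deriv_right_le_deriv_boundary (a := 0) (b := 1)
    (fun t ht ↦ (hφ t ht).continuousAt.continuousWithinAt)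
    (fun t ht ↦ (hφ t (Ico_subset_Icc_self ht)).hasDerivWithinAt) (by simp)
    (fun t _ ↦ (hbound t).continuousAt.continuousWithinAt)
    (fun t _ ↦ (hbound t).hasDerivWithinAt) hφ' (right_mem_Icc.mpr zero_le_one)
  simpa using key

theorem le_add_inner_gradient_add_sq_of_lipschitz_gradient {E : Type*} [NormedAddCommGroup E]
    [InnerProductSpace ℝ E] [CompleteSpace E] {f : E → ℝ} (hf : Differentiable ℝ f) {L : ℝ}
    (hlip : ∀ a b : E, ‖gradient f a - gradient f b‖ ≤ L * ‖a - b‖) (x y : E) :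
    f y ≤ f x + inner ℝ (gradient f x) (y - x) + L / 2 * ‖y - x‖ ^ 2 := by
  set d := y - x
  have hline : ∀ t : ℝ, HasDerivAt (fun s : ℝ ↦ f (x + s • d))
      (inner ℝ (gradient f (x + t • d)) d) t := fun t ↦ by
    have hpath : HasDerivAt (fun s : ℝ ↦ x + s • d) d t := by
      simpa using ((hasDerivAt_id t).smul_const d).const_add x
    simpa [Function.comp_def, InnerProductSpace.toDual_apply_apply] using
      (hf _).hasGradientAt.hasFDerivAt.comp_hasDerivAt t hpath
  have hgrowth : ∀ t ∈ Set.Ico (0 : ℝ) 1, inner ℝ (gradient f (x + t • d)) d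
      ≤ inner ℝ (gradient f (x + (0 : ℝ) • d)) d + L * ‖d‖ ^ 2 * t := by
    intro t ht
    rw [zero_smul, add_zero]
    have hdist : ‖gradient f (x + t • d) - gradient f x‖ ≤ L * (t * ‖d‖) := by
      simpa [norm_smul, abs_of_nonneg ht.1] using hlip (x + t • d) x
    have hcs := real_inner_le_norm (gradient f (x + t • d) - gradient f x) d
    rw [inner_sub_left] at hcs
    nlinarith [norm_nonneg d]
  have key := image_one_le_of_deriv_le_add_mul (fun t _ ↦ hline t) hgrowth
  simp only [d, one_smul, zero_smul, add_zero, add_sub_cancel] at key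
  linarith

theorem real_inner_eq_re_inner_euclideanSpace {ι : Type*} [Fintype ι]
    (x y : EuclideanSpace ℂ ι) : inner ℝ x y = (inner ℂ x y).re := by
  rw [PiLp.inner_apply, PiLp.inner_apply, Complex.re_sum]
  rfl

section QuadraticForm

variable {ι : Type*} [Fintype ι] [DecidableEq ι]

theorem re_inner_toEuclideanLin_smul_sub_smul_one (B : Matrix ι ι ℂ) (c η : ℝ)
    (v : EuclideanSpace ℂ ι) :
    (inner ℂ v (toEuclideanLin ((c : ℂ) • B - (η : ℂ) • 1) v)).re
      = c * (inner ℂ v (toEuclideanLin B v)).re - η * ‖v‖ ^ 2 := by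
  simp only [map_sub, _root_.map_smul, toLpLin_one, LinearMap.sub_apply,
    LinearMap.smul_apply, LinearMap.id_apply, inner_sub_right, inner_smul_right,
    inner_self_eq_norm_sq_to_K, Complex.sub_re, Complex.re_ofReal_mul]
  norm_cast

theorem mul_norm_sq_le_re_inner_toEuclideanLin {B : Matrix ι ι ℂ} {η : ℝ}
    (hB : (B - (η : ℂ) • 1).PosSemidef) (v : EuclideanSpace ℂ ι) :
    η * ‖v‖ ^ 2 ≤ (inner ℂ v (toEuclideanLin B v)).re := by
  have hpos : 0 ≤ (inner ℂ v (toEuclideanLin (B - (η : ℂ) • 1) v)).re :=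
    (isPositive_toEuclideanLin_iff.mpr hB).re_inner_nonneg_right v
  have hexpand := re_inner_toEuclideanLin_smul_sub_smul_one B 1 η v
  rw [Complex.ofReal_one, one_smul, one_mul] at hexpand
  linarith

end QuadraticForm

theorem sufficient_decrease_step_general (N : ℕ) (L : ℝ)
    (f : EuclideanSpace ℂ (Fin N) → ℝ)
    (hfdiff : Differentiable ℝ f)
    (hflip : ∀ x₁ x₂ : EuclideanSpace ℂ (Fin N),
      ‖gradient f x₁ - gradient f x₂‖ ≤ L * ‖x₁ - x₂‖)
    (h : EuclideanSpace ℂ (Fin N) → ℝ)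
    (F : EuclideanSpace ℂ (Fin N) → ℝ) (hFdef : ∀ x, F x = h x + f x)
    (B : Matrix (Fin N) (Fin N) ℂ)
    (ηlo : ℝ) (hηlo : 0 < ηlo) (hBlo : (B - (ηlo : ℂ) • 1).PosSemidef)
    (α : ℝ) (hα0 : 0 < α) (hαub : α < 2 * ηlo / (ηlo + L))
    (xk xk1 : EuclideanSpace ℂ (Fin N))
    (hineq : (inner (𝕜 := ℂ) (gradient f xk) (xk1 - xk)).re ≤
      -(1 / 2) * (inner (𝕜 := ℂ) (xk - xk1)
          (Matrix.toEuclideanLin (((2 / α : ℝ) : ℂ) • B - (ηlo : ℂ) • 1) (xk - xk1))).re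
        + h xk - h xk1) :
    0 < ηlo / α - (ηlo + L) / 2 ∧
    (ηlo / α - (ηlo + L) / 2) * ‖xk - xk1‖ ^ 2 ≤ F xk - F xk1 ∧
    F xk1 ≤ F xk := by
  have hηL : 0 < ηlo + L := by
    by_contra! hle
    linarith [div_nonpos_of_nonneg_of_nonpos (by linarith : 0 ≤ 2 * ηlo) hle]
  have hυ : 0 < ηlo / α - (ηlo + L) / 2 := by
    have := (lt_div_iff₀ hηL).mp hαub
    rw [sub_pos, div_lt_div_iff₀ two_pos hα0]
    linarith
  have hdesc := le_add_inner_gradient_add_sq_of_lipschitz_gradient hfdiff hflip xk xk1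
  rw [real_inner_eq_re_inner_euclideanSpace, norm_sub_rev] at hdesc
  rw [re_inner_toEuclideanLin_smul_sub_smul_one] at hineq
  have hquad := mul_le_mul_of_nonneg_left (mul_norm_sq_le_re_inner_toEuclideanLin hBlo (xk - xk1))
    (by positivity : 0 ≤ 2 / α)
  have hdecrease : (ηlo / α - (ηlo + L) / 2) * ‖xk - xk1‖ ^ 2 ≤ F xk - F xk1 := by
    rw [hFdef, hFdef]
    linear_combination hdesc + hineq + hquad / 2
  exact ⟨hυ, hdecrease, by nlinarith [sq_nonneg ‖xk - xk1‖]⟩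

/-- **Sufficient decrease (Theorem 1, key step).**  `ℂ^N` carries the
Hermitian inner product `⟨u,v⟩ = vᴴ u`, gradients are taken with respect to
the real inner product `Re(vᴴ u)`.  If `f` is `L`-smooth, `F = h + f`, `B`
is Hermitian with `B ⪰ η̲ I`, `0 < α < 2η̲/(η̲+L)`, and the iterates satisfy
`Re⟨∇f(x_k), x_{k+1}-x_k⟩ ≤ -(1/2)(x_k-x_{k+1})ᴴ((2/α)B-η̲I)(x_k-x_{k+1})
 + h(x_k) - h(x_{k+1})`, then with `υ = η̲/α - (η̲+L)/2 > 0` one has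
`υ‖x_k - x_{k+1}‖² ≤ F(x_k) - F(x_{k+1})`, in particular `F(x_{k+1}) ≤ F(x_k)`. -/
theorem sufficient_decrease_step (N : ℕ) (L : ℝ)
    (f : EuclideanSpace ℂ (Fin N) → ℝ)
    (hfdiff : Differentiable ℝ f)
    (hflip : ∀ x₁ x₂ : EuclideanSpace ℂ (Fin N),
      ‖gradient f x₁ - gradient f x₂‖ ≤ L * ‖x₁ - x₂‖)
    (h : EuclideanSpace ℂ (Fin N) → ℝ)
    (F : EuclideanSpace ℂ (Fin N) → ℝ) (hFdef : ∀ x, F x = h x + f x)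
    (B : Matrix (Fin N) (Fin N) ℂ) (hBherm : B.IsHermitian)
    (ηlo : ℝ) (hηlo : 0 < ηlo) (hBlo : (B - (ηlo : ℂ) • 1).PosSemidef)
    (α : ℝ) (hα0 : 0 < α) (hαub : α < 2 * ηlo / (ηlo + L))
    (xk xk1 : EuclideanSpace ℂ (Fin N))
    (hineq : (inner (𝕜 := ℂ) (gradient f xk) (xk1 - xk)).re ≤
      -(1 / 2) * (inner (𝕜 := ℂ) (xk - xk1)
          (Matrix.toEuclideanLin (((2 / α : ℝ) : ℂ) • B - (ηlo : ℂ) • 1) (xk - xk1))).re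
        + h xk - h xk1) :
    0 < ηlo / α - (ηlo + L) / 2 ∧
    (ηlo / α - (ηlo + L) / 2) * ‖xk - xk1‖ ^ 2 ≤ F xk - F xk1 ∧
    F xk1 ≤ F xk :=
  sufficient_decrease_step_general N L f hfdiff hflip h F hFdef B ηlo hηlo hBlo α hα0 hαub xk xk1
    hineq
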